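/- Let A be an m×n real matrix with singular value decomposition A = UΣV*, and let Ṽ ∈ ℝ^{n×r} and Ũ ∈ ℝ^{m×r} be orthonormal matrices whose columns span exactly the leading r-dimensional right and left singular subspaces of A (i.e., the column spaces of the first r columns of V and U, respectively), where σ_r(A) > 0. Then the generalized Nyström approximation recovers the leading singular values exactly: σ_i(AṼ(Ũ*AṼ)†Ũ*A) = σ_i(A) for all i = 1,…,r. -/

import Mathlib

open Matrix

theorem Matrix.isHermitian_transpose_mul_self {m n α : Type*} [Fintype m] [CommSemiring α]
    [StarRing α] [TrivialStar α] (A : Matrix m n α) : (Aᵀ * A).IsHermitian := by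
  rw [IsHermitian, conjTranspose_eq_transpose_of_trivial, transpose_mul, transpose_transpose]

/-- The tuple `f` sorted in nonincreasing order. -/
noncomputable def sortedDesc {α : Type*} [Fintype α] (f : α → ℝ) :
    Fin (Fintype.card α) → ℝ := fun i =>
  let g : Fin (Fintype.card α) → ℝ := f ∘ (Fintype.equivFin α).symm
  g (Tuple.sort g i.rev)

/-- Singular values of a real matrix, in nonincreasing order (generic index types). -/
noncomputable def sVals {m n : Type*} [Fintype m] [Fintype n] [DecidableEq n]
    (M : Matrix m n ℝ) : Fin (Fintype.card n) → ℝ :=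
  sortedDesc fun j => Real.sqrt ((Matrix.isHermitian_transpose_mul_self M).eigenvalues j)

/-- Singular values of a real `Fin m × Fin n` matrix, in nonincreasing order,
`singularValues M 0` being the largest. -/
noncomputable def singularValues {m n : ℕ} (M : Matrix (Fin m) (Fin n) ℝ) :
    Fin n → ℝ := fun i =>
  let g : Fin n → ℝ := fun j =>
    Real.sqrt ((Matrix.isHermitian_transpose_mul_self M).eigenvalues j)
  g (Tuple.sort g i.rev)

/-- The spectral (operator 2-)norm of a real matrix. -/
noncomputable def specNorm {m n : Type*} [Fintype m] [Fintype n] [DecidableEq n]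
    (M : Matrix m n ℝ) : ℝ :=
  ‖LinearMap.toContinuousLinearMap (Matrix.toEuclideanLin M)‖

/-- The Moore-Penrose pseudoinverse of a real matrix, defined via the Tikhonov
regularization limit of `(AᵀA + εI)⁻¹Aᵀ` as `ε` tends to `0` from above. -/
noncomputable def pinv {m n : Type*} [Fintype m] [Fintype n] [DecidableEq n]
    (A : Matrix m n ℝ) : Matrix n m ℝ :=
  Filter.limUnder (nhdsWithin 0 (Set.Ioi 0)) fun ε : ℝ => (Aᵀ * A + ε • 1)⁻¹ * Aᵀ

/-! Write `V₁`, `U₁` for the leading `r` columns of `V`, `U` and `S₁` for the leading `r × r`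
block of `Σ`. Since the sketches are orthonormal bases of the same column spaces, `Ṽ = V₁Q` and
`Ũ = U₁P` with `Q`, `P` orthogonal. Then `AṼ = U₁S₁Q`, `ŨᵀA = PᵀS₁V₁ᵀ`, and the core matrix
`ŨᵀAṼ = PᵀS₁Q` is invertible because `σ_r > 0`, so its pseudoinverse is its inverse and the
approximation collapses to the truncated SVD `U₁S₁V₁ᵀ = U diag(σ₁, …, σ_r, 0, …, 0) Vᵀ`. The
singular values of the latter are read off from the characteristic polynomial of its Gram
matrix `V diag(σ₁², …, σ_r², 0, …, 0) Vᵀ`. -/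

theorem Fin.sum_univ_castLE {M : Type*} [AddCommMonoid M] {r n : ℕ} (h : r ≤ n) (g : Fin n → M) :
    ∑ j : Fin r, g (Fin.castLE h j) = ∑ j : Fin n, if (j : ℕ) < r then g j else 0 := by
  rw [← Finset.sum_filter]
  refine Finset.sum_nbij (Fin.castLE h) (by simp) (Fin.castLE_injective h).injOn ?_ (by simp)
  intro j hj
  exact ⟨⟨j, by simpa using hj⟩, by simp, rfl⟩

theorem Tuple.apply_sort_rev_eq_of_map_univ_eq {α : Type*} [LinearOrder α] {k : ℕ}
    {f g : Fin k → α} (h : Finset.univ.val.map f = Finset.univ.val.map g) (hg : Antitone g)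
    (i : Fin k) : f (Tuple.sort f i.rev) = g i := by
  have hsorted : ∀ φ : Fin k → α, List.Pairwise (· ≤ ·) (List.ofFn (φ ∘ Tuple.sort φ)) :=
    fun φ => List.pairwise_ofFn.mpr fun _ _ hab => Tuple.monotone_sort φ hab.le
  rw [Fin.univ_val_map, Fin.univ_val_map, Multiset.coe_eq_coe] at h
  have hperm : (List.ofFn (f ∘ Tuple.sort f)).Perm (List.ofFn (g ∘ Tuple.sort g)) :=
    ((Tuple.sort f).ofFn_comp_perm f).trans (h.trans ((Tuple.sort g).ofFn_comp_perm g).symm)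
  have hfg : f ∘ Tuple.sort f = g ∘ Tuple.sort g :=
    List.ofFn_injective (hperm.eq_of_pairwise' (hsorted f) (hsorted g))
  have hrev : g ∘ Fin.revPerm = g ∘ Tuple.sort g :=
    Tuple.comp_sort_eq_comp_iff_monotone.mpr fun a b hab => hg (by simpa using hab)
  simpa using congrFun (hfg.trans hrev.symm) i.rev

theorem Antitone.ite_val_lt {α : Type*} [Preorder α] [Zero α] {n : ℕ} {d : Fin n → α}
    (hd : Antitone d) (hd₀ : ∀ j, 0 ≤ d j) (r : ℕ) :
    Antitone fun j : Fin n => if (j : ℕ) < r then d j else 0 := by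
  intro a b hab
  dsimp only
  by_cases hb : (b : ℕ) < r
  · rw [if_pos hb, if_pos (lt_of_le_of_lt (Fin.le_iff_val_le_val.mp hab) hb)]
    exact hd hab
  · rw [if_neg hb]
    split_ifs
    exacts [hd₀ a, le_rfl]

namespace Matrix

theorem IsHermitian.map_eigenvalues_eq_of_eq_mul_diagonal_mul_transpose {k : Type*} [Fintype k]
    [DecidableEq k] {H W : Matrix k k ℝ} (hH : H.IsHermitian) (hW : Wᵀ * W = 1) {d : k → ℝ}
    (hHW : H = W * diagonal d * Wᵀ) :
    Finset.univ.val.map hH.eigenvalues = Finset.univ.val.map d := by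
  have hchar : H.charpoly = (diagonal d).charpoly := by
    rw [hHW, charpoly_mul_comm, ← Matrix.mul_assoc, hW, Matrix.one_mul]
  have hroots := hH.roots_charpoly_eq_eigenvalues
  rw [hchar, charpoly_diagonal, Polynomial.roots_prod _ _
    (Finset.prod_ne_zero_iff.mpr fun j _ => Polynomial.X_sub_C_ne_zero _)] at hroots
  simpa using hroots.symm

theorem submatrix_id_transpose_mul_self {R k m n : Type*} [Fintype m] [Fintype n]
    [CommSemiring R] [DecidableEq k] [DecidableEq n] {M : Matrix m n R} (hM : Mᵀ * M = 1)
    {f : k → n} (hf : Function.Injective f) : (M.submatrix id f)ᵀ * M.submatrix id f = 1 := by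
  rw [transpose_submatrix, ← submatrix_mul _ _ _ _ _ Function.bijective_id, hM, submatrix_one _ hf]

theorem mul_submatrix_id_of_eq_mul_diagonal_mul_transpose {R k m n p : Type*} [Fintype k]
    [Fintype n] [Fintype p] [CommSemiring R] [DecidableEq k] [DecidableEq n] {A : Matrix m p R}
    {U : Matrix m n R} {V : Matrix p n R} {d : n → R}
    (hA : A = U * diagonal d * Vᵀ) (hV : Vᵀ * V = 1) (f : k → n) :
    A * V.submatrix id f = U.submatrix id f * diagonal (d ∘ f) := by
  have hAV : A * V = U * diagonal d := by rw [hA, Matrix.mul_assoc, hV, Matrix.mul_one]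
  rw [← submatrix_id_id A, ← submatrix_mul _ _ _ _ _ Function.bijective_id, hAV]
  ext i j
  simp [mul_diagonal]

theorem submatrix_id_transpose_mul_of_eq_mul_diagonal_mul_transpose {R k m n p : Type*}
    [Fintype k] [Fintype m] [Fintype n] [CommSemiring R] [DecidableEq k] [DecidableEq n]
    {A : Matrix m p R} {U : Matrix m n R} {V : Matrix p n R} {d : n → R}
    (hA : A = U * diagonal d * Vᵀ) (hU : Uᵀ * U = 1) (f : k → n) :
    (U.submatrix id f)ᵀ * A = diagonal (d ∘ f) * (V.submatrix id f)ᵀ := by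
  have hAt : Aᵀ = V * diagonal d * Uᵀ := by
    rw [hA, transpose_mul, transpose_mul, transpose_transpose, diagonal_transpose,
      Matrix.mul_assoc]
  have := congrArg transpose (mul_submatrix_id_of_eq_mul_diagonal_mul_transpose hAt hU f)
  rwa [transpose_mul, transpose_transpose, transpose_mul, diagonal_transpose] at this

theorem submatrix_castLE_mul_diagonal_mul_transpose {m n r : ℕ} {R : Type*} [CommSemiring R]
    (hrn : r ≤ n) (U : Matrix (Fin m) (Fin n) R) (V : Matrix (Fin n) (Fin n) R) (d : Fin n → R) :
    U.submatrix id (Fin.castLE hrn) * diagonal (d ∘ Fin.castLE hrn) *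
        (V.submatrix id (Fin.castLE hrn))ᵀ =
      U * diagonal (fun j : Fin n => if (j : ℕ) < r then d j else 0) * Vᵀ := by
  ext i k
  rw [mul_apply, mul_apply]
  simp only [mul_diagonal, submatrix_apply, transpose_apply, id_eq, Function.comp_apply]
  rw [Fin.sum_univ_castLE hrn (fun j => U i j * d j * V k j)]
  simp [ite_mul, mul_ite]

theorem mul_mul_transpose_mul_eq_of_range_le {R a k l : Type*} [CommSemiring R] [Fintype a]
    [Fintype k] [Fintype l] [DecidableEq k] {W : Matrix a k R} {T : Matrix a l R}
    (hW : Wᵀ * W = 1) (h : LinearMap.range T.mulVecLin ≤ LinearMap.range W.mulVecLin) :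
    W * (Wᵀ * T) = T := by
  refine ext_iff_mulVec.mpr fun v => ?_
  obtain ⟨c, hc⟩ := h ⟨v, rfl⟩
  rw [mulVecLin_apply, mulVecLin_apply] at hc
  rw [← mulVec_mulVec, ← mulVec_mulVec, ← hc, mulVec_mulVec, mulVec_mulVec,
    Matrix.mul_assoc, hW, Matrix.mul_one]

theorem isUnit_det_transpose_mul_of_range_le {R a k : Type*} [CommRing R] [Fintype a]
    [Fintype k] [DecidableEq k] {W T : Matrix a k R} (hW : Wᵀ * W = 1) (hT : Tᵀ * T = 1)
    (h : LinearMap.range T.mulVecLin ≤ LinearMap.range W.mulVecLin) : IsUnit (Wᵀ * T).det := by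
  refine isUnit_det_of_left_inverse (B := (Wᵀ * T)ᵀ) ?_
  rw [transpose_mul, transpose_transpose, Matrix.mul_assoc,
    mul_mul_transpose_mul_eq_of_range_le hW h, hT]

theorem mul_mul_inv_mul_mul_cancel {R k : Type*} [CommRing R] [Fintype k] [DecidableEq k]
    {L M N : Matrix k k R} (hL : IsUnit L.det) (hM : IsUnit M.det) (hN : IsUnit N.det) :
    M * N * (L * M * N)⁻¹ * (L * M) = M := by
  have hLM : IsUnit (L * M).det := by rw [det_mul]; exact hL.mul hM
  rw [Matrix.mul_inv_rev, Matrix.mul_assoc M, Matrix.mul_nonsing_inv_cancel_left _ _ hN,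
    Matrix.mul_assoc, Matrix.nonsing_inv_mul _ hLM, Matrix.mul_one]

end Matrix

theorem singularValues_antitone {m n : ℕ} (M : Matrix (Fin m) (Fin n) ℝ) :
    Antitone (singularValues M) := fun _ _ hab =>
  Tuple.monotone_sort (fun j => √((isHermitian_transpose_mul_self M).eigenvalues j))
    (Fin.rev_le_rev.mpr hab)

theorem singularValues_nonneg {m n : ℕ} (M : Matrix (Fin m) (Fin n) ℝ) (i : Fin n) :
    0 ≤ singularValues M i :=
  Real.sqrt_nonneg _

theorem singularValues_mul_diagonal_mul_transpose {m n : ℕ} {U : Matrix (Fin m) (Fin n) ℝ}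
    {V : Matrix (Fin n) (Fin n) ℝ} (hU : Uᵀ * U = 1) (hV : Vᵀ * V = 1) {d : Fin n → ℝ}
    (hd₀ : ∀ j, 0 ≤ d j) (hd : Antitone d) : singularValues (U * diagonal d * Vᵀ) = d := by
  set M := U * diagonal d * Vᵀ
  have hMM : Mᵀ * M = V * diagonal (fun j => d j ^ 2) * Vᵀ := by
    simp only [M, transpose_mul, transpose_transpose, diagonal_transpose, Matrix.mul_assoc]
    rw [← Matrix.mul_assoc Uᵀ, hU, Matrix.one_mul, ← Matrix.mul_assoc (diagonal d),
      diagonal_mul_diagonal]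
    simp only [sq]
  have hH := isHermitian_transpose_mul_self M
  have hmap : Finset.univ.val.map (fun j => √(hH.eigenvalues j)) = Finset.univ.val.map d := by
    rw [show (fun j => √(hH.eigenvalues j)) = Real.sqrt ∘ hH.eigenvalues from rfl,
      ← Multiset.map_map, hH.map_eigenvalues_eq_of_eq_mul_diagonal_mul_transpose hV hMM,
      Multiset.map_map]
    exact Multiset.map_congr rfl fun j _ => Real.sqrt_sq (hd₀ j)
  funext i
  exact Tuple.apply_sort_rev_eq_of_map_univ_eq hmap hd i

theorem pinv_eq_inv {k : Type*} [Fintype k] [DecidableEq k] {B : Matrix k k ℝ}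
    (hB : IsUnit B.det) : pinv B = B⁻¹ := by
  have hBt : IsUnit Bᵀ.det := by rwa [det_transpose]
  have hBtB : IsUnit (Bᵀ * B).det := by rw [det_mul]; exact hBt.mul hB
  have hreg : Filter.Tendsto (fun ε : ℝ => Bᵀ * B + ε • (1 : Matrix k k ℝ))
      (nhdsWithin 0 (Set.Ioi 0)) (nhds (Bᵀ * B)) := by
    have hc : Continuous fun ε : ℝ => Bᵀ * B + ε • (1 : Matrix k k ℝ) := by fun_prop
    simpa using (hc.tendsto 0).mono_left nhdsWithin_le_nhds
  have hlim : Filter.Tendsto (fun ε : ℝ => (Bᵀ * B + ε • (1 : Matrix k k ℝ))⁻¹ * Bᵀ)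
      (nhdsWithin 0 (Set.Ioi 0)) (nhds ((Bᵀ * B)⁻¹ * Bᵀ)) :=
    ((continuousAt_matrix_inv _ (NormedRing.inverse_continuousAt hBtB.unit)).tendsto.comp
      hreg).mul tendsto_const_nhds
  rw [pinv, hlim.limUnder_eq, Matrix.mul_inv_rev, Matrix.mul_assoc,
    Matrix.nonsing_inv_mul _ hBt, Matrix.mul_one]

theorem nystrom_eq_of_range_le {m n k : Type*} [Fintype m] [Fintype n] [Fintype k]
    [DecidableEq k] {A : Matrix m n ℝ} {U₁ : Matrix m k ℝ} {V₁ : Matrix n k ℝ}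
    {S : Matrix k k ℝ} (hU₁ : U₁ᵀ * U₁ = 1) (hV₁ : V₁ᵀ * V₁ = 1) (hS : IsUnit S.det)
    (hAV : A * V₁ = U₁ * S) (hUA : U₁ᵀ * A = S * V₁ᵀ) {tV : Matrix n k ℝ} {tU : Matrix m k ℝ}
    (htV : tVᵀ * tV = 1) (htU : tUᵀ * tU = 1)
    (hrV : LinearMap.range tV.mulVecLin ≤ LinearMap.range V₁.mulVecLin)
    (hrU : LinearMap.range tU.mulVecLin ≤ LinearMap.range U₁.mulVecLin) :
    A * tV * pinv (tUᵀ * A * tV) * (tUᵀ * A) = U₁ * S * V₁ᵀ := by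
  set Q := V₁ᵀ * tV
  set P := U₁ᵀ * tU
  have hQ : IsUnit Q.det := isUnit_det_transpose_mul_of_range_le hV₁ htV hrV
  have hP : IsUnit Pᵀ.det := by
    rw [det_transpose]; exact isUnit_det_transpose_mul_of_range_le hU₁ htU hrU
  have hAtV : A * tV = U₁ * (S * Q) := by
    rw [← mul_mul_transpose_mul_eq_of_range_le hV₁ hrV, ← Matrix.mul_assoc, hAV, Matrix.mul_assoc]
  have htUA : tUᵀ * A = Pᵀ * S * V₁ᵀ := by
    rw [← mul_mul_transpose_mul_eq_of_range_le hU₁ hrU, transpose_mul, Matrix.mul_assoc, hUA,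
      Matrix.mul_assoc]
  have hB : tUᵀ * A * tV = Pᵀ * S * Q := by
    rw [htUA, ← mul_mul_transpose_mul_eq_of_range_le hV₁ hrV, Matrix.mul_assoc (Pᵀ * S),
      ← Matrix.mul_assoc V₁ᵀ, hV₁, Matrix.one_mul]
  have hBdet : IsUnit (Pᵀ * S * Q).det := by rw [det_mul, det_mul]; exact (hP.mul hS).mul hQ
  calc A * tV * pinv (tUᵀ * A * tV) * (tUᵀ * A)
      = U₁ * (S * Q * (Pᵀ * S * Q)⁻¹ * (Pᵀ * S)) * V₁ᵀ := by
        rw [hB, pinv_eq_inv hBdet, hAtV, htUA]; simp only [Matrix.mul_assoc]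
    _ = U₁ * S * V₁ᵀ := by rw [mul_mul_inv_mul_mul_cancel hP hS hQ]

/-- If the columns of the orthonormal matrices `Ṽ` and `Ũ` span exactly the leading
`r`-dimensional right and left singular subspaces of `A` (with `σ_r(A) > 0`), then
the generalized Nyström approximation recovers the leading `r` singular values
exactly: `σ_i(AṼ(Ũ*AṼ)†Ũ*A) = σ_i(A)` for `i = 1, …, r`. -/
theorem generalized_nystrom_exact_on_exact_subspaces
    (m n r : ℕ) (hr : 0 < r) (hrn : r ≤ n)
    (A : Matrix (Fin m) (Fin n) ℝ)
    (U : Matrix (Fin m) (Fin n) ℝ) (V : Matrix (Fin n) (Fin n) ℝ)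
    (hU : Uᵀ * U = 1) (hV : Vᵀ * V = 1)
    (hSVD : A = U * Matrix.diagonal (fun i => singularValues A i) * Vᵀ)
    (tV : Matrix (Fin n) (Fin r) ℝ) (tU : Matrix (Fin m) (Fin r) ℝ)
    (htV : tVᵀ * tV = 1) (htU : tUᵀ * tU = 1)
    (hspanV : LinearMap.range tV.mulVecLin =
      LinearMap.range (V.submatrix id (Fin.castLE hrn)).mulVecLin)
    (hspanU : LinearMap.range tU.mulVecLin =
      LinearMap.range (U.submatrix id (Fin.castLE hrn)).mulVecLin)
    (hσr : 0 < singularValues A ⟨r - 1, by omega⟩) :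
    ∀ i : Fin r,
      singularValues (A * tV * pinv (tUᵀ * A * tV) * (tUᵀ * A)) (Fin.castLE hrn i) =
        singularValues A (Fin.castLE hrn i) := by
  intro i
  have hs := singularValues_antitone A
  have hS : IsUnit (diagonal (singularValues A ∘ Fin.castLE hrn)).det := by
    rw [det_diagonal]
    refine (Finset.prod_pos fun j _ => hσr.trans_le (hs ?_)).ne'.isUnit
    rw [Fin.le_iff_val_le_val, Fin.val_castLE]
    exact Nat.le_sub_one_of_lt j.isLt
  rw [nystrom_eq_of_range_le (submatrix_id_transpose_mul_self hU (Fin.castLE_injective hrn))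
      (submatrix_id_transpose_mul_self hV (Fin.castLE_injective hrn)) hS
      (mul_submatrix_id_of_eq_mul_diagonal_mul_transpose hSVD hV _)
      (submatrix_id_transpose_mul_of_eq_mul_diagonal_mul_transpose hSVD hU _)
      htV htU hspanV.le hspanU.le,
    submatrix_castLE_mul_diagonal_mul_transpose,
    singularValues_mul_diagonal_mul_transpose hU hV
      (fun j => by split_ifs; exacts [singularValues_nonneg A j, le_rfl])
      (hs.ite_val_lt (singularValues_nonneg A) r)]
  simp
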